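/- arXiv:1103.4614 — 3 statements merged into one kernel-verified Lean document; each statement's English description precedes it below -/
import Mathlib

section
/- Let (v_g)_{g∈G} and (v′_g)_{g∈G} be two norm-minimizing G-decompositions of the same vector β ∈ ℝ^p, i.e. both attain the infimum defining ‖β‖_{2,1,G}. Then for every g ∈ G, either ‖v_g‖₂ · ‖v′_g‖₂ = 0, or v_g/‖v_g‖₂ = v′_g/‖v′_g‖₂. -/
/-!
The midpoint `(v + v') / 2` of two norm-minimizing decompositions is again a decomposition, so
its cost is at least `‖β‖_{2,1,G}`; by the triangle inequality it is also at most the average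
cost of `v` and `v'`, which is `‖β‖_{2,1,G}`. Hence `‖v_g + v'_g‖ = ‖v_g‖ + ‖v'_g‖` for every
group `g`, and equality in the triangle inequality of the strictly convex Euclidean norm forces
`v_g` and `v'_g` onto the same ray.
-/

open Finset

/-- The Euclidean (ℓ2) norm of a vector in ℝ^p. -/
noncomputable def l2norm {p : ℕ} (v : Fin p → ℝ) : ℝ := Real.sqrt (∑ j, v j ^ 2)

/-- A `G`-decomposition of `β`: a family `(v_g)_{g ∈ G}` of vectors with
`supp (v g) ⊆ g` for each `g ∈ G` and `∑_{g ∈ G} v g = β`. -/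
def IsDecomp {p : ℕ} (G : Finset (Finset (Fin p))) (β : Fin p → ℝ)
    (v : Finset (Fin p) → Fin p → ℝ) : Prop :=
  (∀ g ∈ G, ∀ j, j ∉ g → v g j = 0) ∧ (∑ g ∈ G, v g) = β

/-- The overlap norm `‖β‖_{2,1,G}`. -/
noncomputable def overlapNorm {p : ℕ} (G : Finset (Finset (Fin p))) (β : Fin p → ℝ) : ℝ :=
  sInf {r : ℝ | ∃ v, IsDecomp G β v ∧ r = ∑ g ∈ G, l2norm (v g)}

/-- A norm-minimizing `G`-decomposition of `β`. -/
def IsMinDecomp {p : ℕ} (G : Finset (Finset (Fin p))) (β : Fin p → ℝ)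
    (v : Finset (Fin p) → Fin p → ℝ) : Prop :=
  IsDecomp G β v ∧ ∑ g ∈ G, l2norm (v g) = overlapNorm G β

lemma l2norm_eq_norm_toLp {p : ℕ} (x : Fin p → ℝ) : l2norm x = ‖WithLp.toLp 2 x‖ := by
  simp [l2norm, EuclideanSpace.norm_eq, sq_abs]

lemma l2norm_nonneg {p : ℕ} (x : Fin p → ℝ) : 0 ≤ l2norm x := Real.sqrt_nonneg _

lemma l2norm_add_le {p : ℕ} (x y : Fin p → ℝ) : l2norm (x + y) ≤ l2norm x + l2norm y := by
  simpa only [l2norm_eq_norm_toLp, WithLp.toLp_add] using norm_add_le _ _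

lemma l2norm_smul {p : ℕ} (c : ℝ) (x : Fin p → ℝ) : l2norm (c • x) = |c| * l2norm x := by
  rw [l2norm_eq_norm_toLp, l2norm_eq_norm_toLp, WithLp.toLp_smul, norm_smul, Real.norm_eq_abs]

lemma l2norm_mul_eq_zero_or_inv_smul_eq_of_l2norm_add_eq {p : ℕ} {x y : Fin p → ℝ}
    (h : l2norm (x + y) = l2norm x + l2norm y) :
    l2norm x * l2norm y = 0 ∨ (l2norm x)⁻¹ • x = (l2norm y)⁻¹ • y := by
  simp only [l2norm_eq_norm_toLp, WithLp.toLp_add] at h ⊢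
  rcases sameRay_iff_inv_norm_smul_eq.mp (sameRay_iff_norm_add.mpr h) with hx | hy | hdir
  · simp [hx]
  · simp [hy]
  · exact Or.inr (WithLp.toLp_injective 2 (by simpa only [WithLp.toLp_smul] using hdir))

section Decomposition

variable {p : ℕ} {G : Finset (Finset (Fin p))} {β : Fin p → ℝ} {v v' : Finset (Fin p) → Fin p → ℝ}

lemma IsDecomp.smul_add_smul (hv : IsDecomp G β v) (hv' : IsDecomp G β v') {a b : ℝ}
    (hab : a + b = 1) : IsDecomp G β (fun g => a • v g + b • v' g) := by
  refine ⟨fun g hg j hj => ?_, ?_⟩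
  · simp [hv.1 g hg j hj, hv'.1 g hg j hj]
  · rw [sum_add_distrib, ← smul_sum, ← smul_sum, hv.2, hv'.2, ← add_smul, hab, one_smul]

lemma overlapNorm_le_of_isDecomp (hv : IsDecomp G β v) :
    overlapNorm G β ≤ ∑ g ∈ G, l2norm (v g) :=
  csInf_le ⟨0, by rintro _ ⟨u, -, rfl⟩; exact sum_nonneg fun g _ => l2norm_nonneg _⟩ ⟨v, hv, rfl⟩

lemma IsMinDecomp.l2norm_add_eq (hv : IsMinDecomp G β v) (hv' : IsMinDecomp G β v') :
    ∀ g ∈ G, l2norm (v g + v' g) = l2norm (v g) + l2norm (v' g) := by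
  have hmid := overlapNorm_le_of_isDecomp (hv.1.smul_add_smul hv'.1 (add_halves (1 : ℝ)))
  simp only [← smul_add, l2norm_smul, abs_of_pos (one_half_pos (α := ℝ)), ← mul_sum] at hmid
  have hge : ∑ g ∈ G, (l2norm (v g) + l2norm (v' g)) ≤ ∑ g ∈ G, l2norm (v g + v' g) := by
    rw [sum_add_distrib, hv.2, hv'.2]
    linarith
  have htri : ∀ g ∈ G, l2norm (v g + v' g) ≤ l2norm (v g) + l2norm (v' g) :=
    fun g _ => l2norm_add_le _ _
  exact (sum_eq_sum_iff_of_le htri).mp ((sum_le_sum htri).antisymm hge)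

end Decomposition

theorem minDecomp_directions_agree_general {p : ℕ}
    (G : Finset (Finset (Fin p)))
    (β : Fin p → ℝ) (v v' : Finset (Fin p) → Fin p → ℝ)
    (hv : IsMinDecomp G β v) (hv' : IsMinDecomp G β v') :
    ∀ g ∈ G, l2norm (v g) * l2norm (v' g) = 0 ∨
      (l2norm (v g))⁻¹ • v g = (l2norm (v' g))⁻¹ • v' g :=
  fun g hg => l2norm_mul_eq_zero_or_inv_smul_eq_of_l2norm_add_eq (hv.l2norm_add_eq hv' g hg)

/-- any two norm-minimizing `G`-decompositions of the same vector `β` satisfy,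
for every `g ∈ G`: either `‖v_g‖·‖v'_g‖ = 0`, or `v_g/‖v_g‖ = v'_g/‖v'_g‖`. -/
theorem minDecomp_directions_agree {p : ℕ} (hp : 1 ≤ p)
    (G : Finset (Finset (Fin p))) (hGne : G.Nonempty)
    (hcover : ∀ i : Fin p, ∃ g ∈ G, i ∈ g)
    (β : Fin p → ℝ) (v v' : Finset (Fin p) → Fin p → ℝ)
    (hv : IsMinDecomp G β v) (hv' : IsMinDecomp G β v') :
    ∀ g ∈ G, l2norm (v g) * l2norm (v' g) = 0 ∨
      (l2norm (v g))⁻¹ • v g = (l2norm (v' g))⁻¹ • v' g :=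
  minDecomp_directions_agree_general G β v v' hv hv'
end

section
/- Let Δ ∈ ℝ^p, let (v_g)_{g∈G} be a norm-minimizing G-decomposition of Δ, let J ⊆ G, and let λ > 0, κ > 0. Suppose (i) (1/n)‖XΔ‖₂² + λ‖Δ‖_{2,1,G} ≤ 4λ·Σ_{g∈J}‖v_g‖₂, and (ii) √(ΔᵀXᵀXΔ) ≥ κ·√n·Σ_{g∈J}‖v_g‖₂. Then the cone condition Σ_{g∉J}‖v_g‖₂ ≤ 3·Σ_{g∈J}‖v_g‖₂ holds, and moreover (1/n)‖XΔ‖₂² ≤ 16λ²/κ² and ‖Δ‖_{2,1,G} ≤ 16λ/κ². -/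
open Finset

/-! Write `S` and `T` for the sums of `‖v_g‖₂` over `J` and over `G \ J`; minimality gives
`‖Δ‖_{2,1,G} = S + T`. Dropping the prediction term in (i) leaves `λ (S + T) ≤ 4 λ S`, the cone
condition. Squaring (ii) gives `κ² S² ≤ (1/n)‖XΔ‖₂² ≤ 4 λ S`, hence `S ≤ 4 λ / κ²`, and both bounds
follow from `(1/n)‖XΔ‖₂² ≤ 4 λ S` and `S + T ≤ 4 S`. -/

theorem IsMinDecomp.overlapNorm_eq_sum_add_sum_sdiff {p : ℕ} {G J : Finset (Finset (Fin p))}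
    {Δ : Fin p → ℝ} {v : Finset (Fin p) → Fin p → ℝ} (hv : IsMinDecomp G Δ v) (hJ : J ⊆ G) :
    overlapNorm G Δ = ∑ g ∈ J, l2norm (v g) + ∑ g ∈ G \ J, l2norm (v g) := by
  rw [← hv.2, ← sum_sdiff hJ, add_comm]

theorem sum_l2norm_nonneg {p : ℕ} (s : Finset (Finset (Fin p))) (v : Finset (Fin p) → Fin p → ℝ) :
    0 ≤ ∑ g ∈ s, l2norm (v g) :=
  sum_nonneg fun _ _ => Real.sqrt_nonneg _

theorem sq_le_div_of_mul_sqrt_le_sqrt {a q n : ℝ} (ha : 0 ≤ a) (hq : 0 ≤ q) (hn : 0 < n)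
    (h : a * √n ≤ √q) : a ^ 2 ≤ q / n := by
  have hsq := pow_le_pow_left₀ (mul_nonneg ha (Real.sqrt_nonneg n)) h 2
  rw [mul_pow, Real.sq_sqrt hn.le, Real.sq_sqrt hq] at hsq
  rwa [le_div_iff₀ hn]

theorem le_three_mul_of_add_mul_add_le {Q lam S T : ℝ} (hQ : 0 ≤ Q) (hlam : 0 < lam)
    (h : Q + lam * (S + T) ≤ 4 * lam * S) : T ≤ 3 * S := by
  have : lam * (S + T) ≤ lam * (4 * S) := by linarith
  linarith [le_of_mul_le_mul_left this hlam]

theorem le_div_sq_of_sq_mul_sq_le {κ S c : ℝ} (hκ : 0 < κ) (hS : 0 ≤ S) (hc : 0 ≤ c)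
    (h : κ ^ 2 * S ^ 2 ≤ c * S) : S ≤ c / κ ^ 2 := by
  rw [le_div_iff₀ (by positivity)]
  rcases hS.eq_or_lt with rfl | hS
  · simpa using hc
  · exact le_of_mul_le_mul_right (by linarith) hS

theorem oracle_deterministic_step_general {p n : ℕ} (hn : 1 ≤ n)
    (G : Finset (Finset (Fin p)))
    (X : Matrix (Fin n) (Fin p) ℝ)
    (Δ : Fin p → ℝ) (v : Finset (Fin p) → Fin p → ℝ) (hv : IsMinDecomp G Δ v)
    (J : Finset (Finset (Fin p))) (hJ : J ⊆ G)
    (lam κ : ℝ) (hlam : 0 < lam) (hκ : 0 < κ)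
    (h1 : (1 / (n : ℝ)) * ∑ i, (X.mulVec Δ) i ^ 2 + lam * overlapNorm G Δ ≤
      4 * lam * ∑ g ∈ J, l2norm (v g))
    (h2 : κ * Real.sqrt n * ∑ g ∈ J, l2norm (v g) ≤ Real.sqrt (∑ i, (X.mulVec Δ) i ^ 2)) :
    (∑ g ∈ G \ J, l2norm (v g) ≤ 3 * ∑ g ∈ J, l2norm (v g)) ∧
    (1 / (n : ℝ)) * ∑ i, (X.mulVec Δ) i ^ 2 ≤ 16 * lam ^ 2 / κ ^ 2 ∧
    overlapNorm G Δ ≤ 16 * lam / κ ^ 2 := by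
  have hsplit := hv.overlapNorm_eq_sum_add_sum_sdiff hJ
  set S := ∑ g ∈ J, l2norm (v g)
  set T := ∑ g ∈ G \ J, l2norm (v g)
  have hS : 0 ≤ S := sum_l2norm_nonneg J v
  have hT : 0 ≤ T := sum_l2norm_nonneg (G \ J) v
  have hQ : 0 ≤ ∑ i, (X.mulVec Δ) i ^ 2 := sum_nonneg fun _ _ => sq_nonneg _
  have hQn : 0 ≤ (1 / (n : ℝ)) * ∑ i, (X.mulVec Δ) i ^ 2 := by positivity
  rw [hsplit] at h1 ⊢
  have hlower : κ ^ 2 * S ^ 2 ≤ (1 / (n : ℝ)) * ∑ i, (X.mulVec Δ) i ^ 2 := by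
    rw [← mul_pow, one_div_mul_eq_div]
    exact sq_le_div_of_mul_sqrt_le_sqrt (by positivity) hQ (by exact_mod_cast hn)
      (by rwa [mul_right_comm] at h2)
  have hcone : T ≤ 3 * S := le_three_mul_of_add_mul_add_le hQn hlam h1
  have hupper : (1 / (n : ℝ)) * ∑ i, (X.mulVec Δ) i ^ 2 ≤ 4 * lam * S := by
    linarith [mul_nonneg hlam.le (add_nonneg hS hT)]
  have hSbound : S ≤ 4 * lam / κ ^ 2 :=
    le_div_sq_of_sq_mul_sq_le hκ hS (by positivity) (hlower.trans hupper)
  refine ⟨hcone, ?_, ?_⟩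
  · calc (1 / (n : ℝ)) * ∑ i, (X.mulVec Δ) i ^ 2 ≤ 4 * lam * S := hupper
      _ ≤ 4 * lam * (4 * lam / κ ^ 2) := by gcongr
      _ = 16 * lam ^ 2 / κ ^ 2 := by ring
  · calc S + T ≤ 4 * S := by linarith
      _ ≤ 4 * (4 * lam / κ ^ 2) := by gcongr
      _ = 16 * lam / κ ^ 2 := by ring

/-- basic oracle inequality step. If a norm-minimizing decomposition of `Δ`
satisfies the two displayed inequalities, then the cone condition holds and both the
prediction and estimation bounds follow. -/
theorem oracle_deterministic_step {p n : ℕ} (hp : 1 ≤ p) (hn : 1 ≤ n)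
    (G : Finset (Finset (Fin p))) (hGne : G.Nonempty)
    (hcover : ∀ i : Fin p, ∃ g ∈ G, i ∈ g)
    (X : Matrix (Fin n) (Fin p) ℝ)
    (Δ : Fin p → ℝ) (v : Finset (Fin p) → Fin p → ℝ) (hv : IsMinDecomp G Δ v)
    (J : Finset (Finset (Fin p))) (hJ : J ⊆ G)
    (lam κ : ℝ) (hlam : 0 < lam) (hκ : 0 < κ)
    (h1 : (1 / (n : ℝ)) * ∑ i, (X.mulVec Δ) i ^ 2 + lam * overlapNorm G Δ ≤
      4 * lam * ∑ g ∈ J, l2norm (v g))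
    (h2 : κ * Real.sqrt n * ∑ g ∈ J, l2norm (v g) ≤ Real.sqrt (∑ i, (X.mulVec Δ) i ^ 2)) :
    (∑ g ∈ G \ J, l2norm (v g) ≤ 3 * ∑ g ∈ J, l2norm (v g)) ∧
    (1 / (n : ℝ)) * ∑ i, (X.mulVec Δ) i ^ 2 ≤ 16 * lam ^ 2 / κ ^ 2 ∧
    overlapNorm G Δ ≤ 16 * lam / κ ^ 2 :=
  oracle_deterministic_step_general hn G X Δ v hv J hJ lam κ hlam hκ h1 h2
end

section
/- Let p = 5 and G = {{1,2}, {3,4}, {1,2,3,4}, {5}}. Let a > 0, c ∈ ℝ, and β⁰ = (a, a, 0, 0, c) ∈ ℝ⁵. Then ‖β⁰‖_{2,1,G} = √2·a + |c|, and for every α with 0 < α < a, the G-decomposition v_{{1,2}} = (a−α, a−α, 0, 0, 0), v_{{3,4}} = (0,0,0,0,0), v_{{1,2,3,4}} = (α, α, 0, 0, 0), v_{{5}} = (0, 0, 0, 0, c) is norm-minimizing. In particular, β⁰ has infinitely many distinct norm-minimizing G-decompositions. -/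
open Finset

/-!
The lower bound comes from a dual certificate: if `w` has Euclidean norm at most one on every
group, then Cauchy–Schwarz gives `⟪w, β⟫ ≤ ∑_g ‖v_g‖₂` for every `G`-decomposition `(v_g)`, so
any decomposition whose cost equals `⟪w, β⟫` is norm-minimizing. For the nested groups take
`w = (1/√2, 1/√2, 0, 0, sign c)`: it has norm one on `{1,2}` and on `{1,2,3,4}`, and
`⟪w, β⁰⟫ = √2·a + |c|`. Moving mass `α ∈ [0, a]` between the nested groups `{1,2}` and
`{1,2,3,4}` leaves the cost `√2·(a - α) + √2·α + |c|` unchanged.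
-/

section DualCertificate

variable {p : ℕ}

lemma l2norm_zero : l2norm (0 : Fin p → ℝ) = 0 := by simp [l2norm]

lemma sum_mul_le_l2norm {g : Finset (Fin p)} {w u : Fin p → ℝ}
    (hw : ∑ j ∈ g, w j ^ 2 ≤ 1) (hu : ∀ j, j ∉ g → u j = 0) :
    ∑ j, w j * u j ≤ l2norm u := by
  have hsum : ∀ f : Fin p → ℝ, (∀ j, j ∉ g → f j = 0) → ∑ j ∈ g, f j = ∑ j, f j :=
    fun f hf => sum_subset (subset_univ g) fun j _ hj => hf j hj
  calc ∑ j, w j * u j = ∑ j ∈ g, w j * u j :=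
        (hsum _ fun j hj => by rw [hu j hj, mul_zero]).symm
    _ ≤ √(∑ j ∈ g, w j ^ 2) * √(∑ j ∈ g, u j ^ 2) := Real.sum_mul_le_sqrt_mul_sqrt _ _ _
    _ ≤ 1 * l2norm u := by
        rw [l2norm, hsum (fun j => u j ^ 2) fun j hj => by rw [hu j hj, sq, mul_zero]]
        gcongr
        exact Real.sqrt_le_one.mpr hw
    _ = l2norm u := one_mul _

variable {G : Finset (Finset (Fin p))} {β w : Fin p → ℝ} {v : Finset (Fin p) → Fin p → ℝ}

theorem sum_mul_le_sum_l2norm_of_isDecomp (hw : ∀ g ∈ G, ∑ j ∈ g, w j ^ 2 ≤ 1)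
    (hv : IsDecomp G β v) : ∑ j, w j * β j ≤ ∑ g ∈ G, l2norm (v g) := by
  obtain ⟨hsupp, rfl⟩ := hv
  calc ∑ j, w j * (∑ g ∈ G, v g) j = ∑ g ∈ G, ∑ j, w j * v g j := by
        simp only [Finset.sum_apply, mul_sum]
        exact sum_comm
    _ ≤ ∑ g ∈ G, l2norm (v g) := sum_le_sum fun g hg => sum_mul_le_l2norm (hw g hg) (hsupp g hg)

theorem isMinDecomp_of_dual_certificate (hw : ∀ g ∈ G, ∑ j ∈ g, w j ^ 2 ≤ 1)
    (hv : IsDecomp G β v) (hcost : ∑ g ∈ G, l2norm (v g) ≤ ∑ j, w j * β j) :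
    IsMinDecomp G β v := by
  have hbdd : ∀ r ∈ {r : ℝ | ∃ u, IsDecomp G β u ∧ r = ∑ g ∈ G, l2norm (u g)},
      ∑ j, w j * β j ≤ r := by
    rintro _ ⟨u, hu, rfl⟩
    exact sum_mul_le_sum_l2norm_of_isDecomp hw hu
  refine ⟨hv, le_antisymm ?_ (csInf_le ⟨_, hbdd⟩ ⟨v, hv, rfl⟩)⟩
  exact le_csInf ⟨_, v, hv, rfl⟩ fun r hr => hcost.trans (hbdd r hr)

end DualCertificate

section NestedGroups

abbrev nestedGroups : Finset (Finset (Fin 5)) := {{0, 1}, {2, 3}, {0, 1, 2, 3}, {4}}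

lemma sum_nestedGroups {M : Type*} [AddCommMonoid M] (f : Finset (Fin 5) → M) :
    ∑ g ∈ nestedGroups, f g = f {0, 1} + f {2, 3} + f {0, 1, 2, 3} + f {4} := by
  rw [sum_insert (by decide), sum_insert (by decide), sum_insert (by decide), sum_singleton]
  simp only [add_assoc]

lemma l2norm_vec_pair (x : ℝ) : l2norm ![x, x, 0, 0, 0] = √2 * |x| := by
  rw [l2norm, Fin.sum_univ_five]
  simp only [Matrix.cons_val, ne_eq, OfNat.ofNat_ne_zero, not_false_eq_true, zero_pow, add_zero]
  rw [← two_mul, Real.sqrt_mul zero_le_two, Real.sqrt_sq_eq_abs]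

lemma l2norm_vec_last (c : ℝ) : l2norm ![0, 0, 0, 0, c] = |c| := by
  simp [l2norm, Fin.sum_univ_five, Real.sqrt_sq_eq_abs]

noncomputable def nestedCertificate (c : ℝ) : Fin 5 → ℝ :=
  ![1 / √2, 1 / √2, 0, 0, SignType.sign c]

lemma nestedCertificate_sum_sq_le_one (c : ℝ) :
    ∀ g ∈ nestedGroups, ∑ j ∈ g, nestedCertificate c j ^ 2 ≤ 1 := by
  have hsign : |(SignType.sign c : ℝ)| ≤ 1 := by
    rcases lt_trichotomy c 0 with h | rfl | h <;> simp [*]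
  simp [nestedCertificate, hsign, ← two_mul]

lemma sum_nestedCertificate_mul (a c : ℝ) :
    ∑ j, nestedCertificate c j * ![a, a, 0, 0, c] j = √2 * a + |c| :=
  calc ∑ j, nestedCertificate c j * ![a, a, 0, 0, c] j = 2 * a / √2 + SignType.sign c * c := by
        simp only [nestedCertificate, Fin.sum_univ_five, Matrix.cons_val_zero,
          Matrix.cons_val_one, Matrix.cons_val, mul_zero, add_zero]
        ring
    _ = √2 * a + |c| := by rw [sign_mul_self, mul_div_right_comm, Real.div_sqrt]

def nestedDecomp (a c α : ℝ) : Finset (Fin 5) → Fin 5 → ℝ := fun g =>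
  if g = ({0, 1} : Finset (Fin 5)) then ![a - α, a - α, 0, 0, 0]
  else if g = ({2, 3} : Finset (Fin 5)) then 0
  else if g = ({0, 1, 2, 3} : Finset (Fin 5)) then ![α, α, 0, 0, 0]
  else if g = ({4} : Finset (Fin 5)) then ![0, 0, 0, 0, c]
  else 0

variable (a c α : ℝ)

lemma nestedDecomp_apply_zero_one : nestedDecomp a c α {0, 1} = ![a - α, a - α, 0, 0, 0] :=
  if_pos rfl

lemma nestedDecomp_apply_two_three : nestedDecomp a c α {2, 3} = 0 := by
  rw [nestedDecomp, if_neg (by decide), if_pos rfl]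

lemma nestedDecomp_apply_zero_to_three : nestedDecomp a c α {0, 1, 2, 3} = ![α, α, 0, 0, 0] := by
  rw [nestedDecomp, if_neg (by decide), if_neg (by decide), if_pos rfl]

lemma nestedDecomp_apply_four : nestedDecomp a c α {4} = ![0, 0, 0, 0, c] := by
  rw [nestedDecomp, if_neg (by decide), if_neg (by decide), if_neg (by decide), if_pos rfl]

lemma nestedDecomp_isDecomp : IsDecomp nestedGroups ![a, a, 0, 0, c] (nestedDecomp a c α) := by
  refine ⟨fun g hg j hj => ?_, ?_⟩
  · simp only [mem_insert, mem_singleton] at hg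
    rcases hg with rfl | rfl | rfl | rfl <;> fin_cases j <;>
      simp_all [nestedDecomp_apply_zero_one, nestedDecomp_apply_two_three,
        nestedDecomp_apply_zero_to_three, nestedDecomp_apply_four]
  · rw [sum_nestedGroups, nestedDecomp_apply_zero_one, nestedDecomp_apply_two_three,
      nestedDecomp_apply_zero_to_three, nestedDecomp_apply_four]
    funext j
    fin_cases j <;> simp

lemma sum_l2norm_nestedDecomp :
    ∑ g ∈ nestedGroups, l2norm (nestedDecomp a c α g) = √2 * |a - α| + √2 * |α| + |c| := by
  rw [sum_nestedGroups, nestedDecomp_apply_zero_one, nestedDecomp_apply_two_three,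
    nestedDecomp_apply_zero_to_three, nestedDecomp_apply_four, l2norm_vec_pair, l2norm_vec_pair,
    l2norm_vec_last, l2norm_zero, add_zero]

lemma nestedDecomp_isMinDecomp (hα : 0 ≤ α) (hαa : α ≤ a) :
    IsMinDecomp nestedGroups ![a, a, 0, 0, c] (nestedDecomp a c α) := by
  refine isMinDecomp_of_dual_certificate (nestedCertificate_sum_sq_le_one c)
    (nestedDecomp_isDecomp a c α) ?_
  rw [sum_l2norm_nestedDecomp, sum_nestedCertificate_mul, abs_of_nonneg hα,
    abs_of_nonneg (sub_nonneg.mpr hαa)]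
  exact le_of_eq (by ring)

lemma nestedDecomp_injective : Function.Injective (nestedDecomp a c) := by
  intro α β h
  simpa [nestedDecomp_apply_zero_to_three] using congrFun (congrFun h {0, 1, 2, 3}) 0

end NestedGroups

/-- for `p = 5` and `G = {{1,2},{3,4},{1,2,3,4},{5}}` (0-indexed here as
`{{0,1},{2,3},{0,1,2,3},{4}}`) and `β⁰ = (a,a,0,0,c)` with `a > 0`:
`‖β⁰‖_{2,1,G} = √2·a + |c|`; for every `0 < α < a` the displayed decomposition is
norm-minimizing; and there are infinitely many distinct norm-minimizing decompositions. -/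
theorem nested_groups_nonunique_decomposition (a c : ℝ) (ha : 0 < a) :
    let G : Finset (Finset (Fin 5)) :=
      {({0, 1} : Finset (Fin 5)), {2, 3}, {0, 1, 2, 3}, {4}}
    let β0 : Fin 5 → ℝ := ![a, a, 0, 0, c]
    overlapNorm G β0 = Real.sqrt 2 * a + |c| ∧
    (∀ α : ℝ, 0 < α → α < a →
      IsMinDecomp G β0 (fun g =>
        if g = ({0, 1} : Finset (Fin 5)) then ![a - α, a - α, 0, 0, 0]
        else if g = ({2, 3} : Finset (Fin 5)) then 0
        else if g = ({0, 1, 2, 3} : Finset (Fin 5)) then ![α, α, 0, 0, 0]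
        else if g = ({4} : Finset (Fin 5)) then ![0, 0, 0, 0, c]
        else 0)) ∧
    {v : Finset (Fin 5) → Fin 5 → ℝ | IsMinDecomp G β0 v}.Infinite := by
  intro G β0
  have hmin : ∀ α, 0 ≤ α → α ≤ a → IsMinDecomp G β0 (nestedDecomp a c α) :=
    nestedDecomp_isMinDecomp a c
  refine ⟨?_, fun α h0 h1 => hmin α h0.le h1.le, ?_⟩
  · rw [← (hmin 0 le_rfl ha.le).2, sum_l2norm_nestedDecomp, sub_zero, abs_zero,
      abs_of_pos ha, mul_zero, add_zero]
  · refine ((Set.Ioo_infinite ha).image (nestedDecomp_injective a c).injOn).mono ?_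
    rintro _ ⟨α, hα, rfl⟩
    exact hmin α hα.1.le hα.2.le
end
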